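/- Let ρ = [[a,b],[c,d]] be a 2×2 matrix with a + d = 1. For any two operators V, V' taken from two different sets among {V(I,Z),V(X,Y)}, {V(I,X),V(Y,Z)}, {V(I,Y),V(Z,X)}, we have V(V'(ρ)) = I/2. -/
import Mathlib


open Matrix

abbrev M2 := Matrix (Fin 2) (Fin 2) ℂ

noncomputable def PX : M2 := !![0, 1; 1, 0]
noncomputable def PZ : M2 := !![1, 0; 0, -1]
noncomputable def PY : M2 := PX * PZ

/-- `V(W,W')ρ = (WρW† + W'ρW'†)/2`. -/
noncomputable def Vop (W W' : M2) (ρ : M2) : M2 := (1 / 2 : ℂ) • (W * ρ * Wᴴ + W' * ρ * W'ᴴ)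

/-- The three pairs `{V(I,Z),V(X,Y)}`, `{V(I,X),V(Y,Z)}`, `{V(I,Y),V(Z,X)}`. -/
noncomputable def pairZ : Set (M2 → M2) := {Vop 1 PZ, Vop PX PY}
noncomputable def pairX : Set (M2 → M2) := {Vop 1 PX, Vop PY PZ}
noncomputable def pairY : Set (M2 → M2) := {Vop 1 PY, Vop PZ PX}

section helpers

variable (a b c d : ℂ)

lemma hIZ : Vop 1 PZ !![a, b; c, d] = !![a, 0; 0, d] := by
  ext i j
  fin_cases i <;> fin_cases j <;>
    simp [Vop, PX, PZ, PY, Matrix.mul_apply, Fin.sum_univ_two, Matrix.one_apply,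
      conjTranspose_apply, Matrix.vecMul, dotProduct, Matrix.vecHead,
      Matrix.vecTail] <;> ring_nf

lemma hXY : Vop PX PY !![a, b; c, d] = !![d, 0; 0, a] := by
  ext i j
  fin_cases i <;> fin_cases j <;>
    simp [Vop, PX, PZ, PY, Matrix.mul_apply, Fin.sum_univ_two, Matrix.one_apply,
      conjTranspose_apply, Matrix.vecMul, dotProduct, Matrix.vecHead,
      Matrix.vecTail] <;> ring_nf

lemma hIX : Vop 1 PX !![a, b; c, d] =
    !![(a + d) / 2, (b + c) / 2; (b + c) / 2, (a + d) / 2] := by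
  ext i j
  fin_cases i <;> fin_cases j <;>
    simp [Vop, PX, PZ, PY, Matrix.mul_apply, Fin.sum_univ_two, Matrix.one_apply,
      conjTranspose_apply, Matrix.vecMul, dotProduct, Matrix.vecHead,
      Matrix.vecTail] <;> ring_nf

lemma hYZ : Vop PY PZ !![a, b; c, d] =
    !![(a + d) / 2, -((b + c) / 2); -((b + c) / 2), (a + d) / 2] := by
  ext i j
  fin_cases i <;> fin_cases j <;>
    simp [Vop, PX, PZ, PY, Matrix.mul_apply, Fin.sum_univ_two, Matrix.one_apply,
      conjTranspose_apply, Matrix.vecMul, dotProduct, Matrix.vecHead,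
      Matrix.vecTail] <;> ring_nf

lemma hIY : Vop 1 PY !![a, b; c, d] =
    !![(a + d) / 2, (b - c) / 2; (c - b) / 2, (a + d) / 2] := by
  ext i j
  fin_cases i <;> fin_cases j <;>
    simp [Vop, PX, PZ, PY, Matrix.mul_apply, Fin.sum_univ_two, Matrix.one_apply,
      conjTranspose_apply, Matrix.vecMul, dotProduct, Matrix.vecHead,
      Matrix.vecTail] <;> ring_nf

lemma hZX : Vop PZ PX !![a, b; c, d] =
    !![(a + d) / 2, (c - b) / 2; (b - c) / 2, (a + d) / 2] := by
  ext i j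
  fin_cases i <;> fin_cases j <;>
    simp [Vop, PX, PZ, PY, Matrix.mul_apply, Fin.sum_univ_two, Matrix.one_apply,
      conjTranspose_apply, Matrix.vecMul, dotProduct, Matrix.vecHead,
      Matrix.vecTail] <;> ring_nf

end helpers

theorem Vop_cross_pairs (a b c d : ℂ) (htr : a + d = 1)
    (V V' : M2 → M2)
    (h : (V ∈ pairZ ∧ V' ∈ pairX) ∨ (V ∈ pairZ ∧ V' ∈ pairY) ∨
         (V ∈ pairX ∧ V' ∈ pairZ) ∨ (V ∈ pairX ∧ V' ∈ pairY) ∨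
         (V ∈ pairY ∧ V' ∈ pairZ) ∨ (V ∈ pairY ∧ V' ∈ pairX)) :
    V (V' !![a, b; c, d]) = (1 / 2 : ℂ) • (1 : M2) := by
  simp only [pairZ, pairX, pairY, Set.mem_insert_iff, Set.mem_singleton_iff] at h
  rcases h with ⟨h1 | h1, h2 | h2⟩ | ⟨h1 | h1, h2 | h2⟩ | ⟨h1 | h1, h2 | h2⟩ |
    ⟨h1 | h1, h2 | h2⟩ | ⟨h1 | h1, h2 | h2⟩ | ⟨h1 | h1, h2 | h2⟩ <;>
  subst h1 <;> subst h2 <;>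
  simp only [hIZ, hXY, hIX, hYZ, hIY, hZX] <;>
  ext i j <;>
  fin_cases i <;> fin_cases j <;>
  simp [Matrix.one_apply] <;>
  first
    | linear_combination (1/2:ℂ) * htr
    | linear_combination (-1/2:ℂ) * htr
    | linear_combination htr
    | linear_combination -htr
    | ring_nf
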